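/- Almost surely, τ_∞ < ∞: the passage time from the origin to infinity in f-weighted first passage percolation on ℤ^d with α > 1 is almost surely finite. -/

import Mathlib

open MeasureTheory Metric
open scoped ENNReal NNReal

/-- The `i`th standard unit vector of `ℤ^d`. -/
def unitZ (d : ℕ) (i : Fin d) : Fin d → ℤ := fun j => if j = i then 1 else 0

/-- The embedding of `ℤ^d` into Euclidean space `ℝ^d`. -/
def toEuc {d : ℕ} (v : Fin d → ℤ) : EuclideanSpace ℝ (Fin d) := WithLp.toLp 2 (fun j => (v j : ℝ))

/-- The midpoint of the nearest-neighbor edge of `ℤ^d` from `e.1` to `e.1 + unitZ d e.2`,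
as a point of `ℝ^d`. Edges of `ℤ^d` are encoded by pairs `(v, i)`, representing the edge
from `v` to `v + eᵢ`. -/
noncomputable def midpt {d : ℕ} (e : (Fin d → ℤ) × Fin d) : EuclideanSpace ℝ (Fin d) :=
  WithLp.toLp 2 (fun j => (e.1 j : ℝ) + if j = e.2 then 1 / 2 else 0)

/-- The first passage time `T(u,v)`: the infimum, over all nearest-neighbor paths
`p 0 = u, …, p n = v` (with `e k` the edge traversed at step `k`), of the sum of the
edge passage times `X (e k) ω`. -/
noncomputable def passT {d : ℕ} {Ω : Type*} (X : ((Fin d → ℤ) × Fin d) → Ω → ℝ)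
    (u v : Fin d → ℤ) (ω : Ω) : ℝ≥0∞ :=
  ⨅ (n : ℕ) (p : Fin (n + 1) → (Fin d → ℤ)) (e : Fin n → ((Fin d → ℤ) × Fin d))
    (_ : p 0 = u) (_ : p (Fin.last n) = v)
    (_ : ∀ k : Fin n,
      (p k.castSucc = (e k).1 ∧ p k.succ = (e k).1 + unitZ d (e k).2) ∨
      (p k.succ = (e k).1 ∧ p k.castSucc = (e k).1 + unitZ d (e k).2)),
    ∑ k : Fin n, ENNReal.ofReal (X (e k) ω)

/-- The passage time from `0` to `∞`: `τ_∞ = sup_n inf { T(0,v) : |v| > n }`. -/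
noncomputable def tauInf {d : ℕ} {Ω : Type*} (X : ((Fin d → ℤ) × Fin d) → Ω → ℝ)
    (ω : Ω) : ℝ≥0∞ :=
  ⨆ n : ℕ, ⨅ (v : Fin d → ℤ) (_ : (n : ℝ) < ‖toEuc v‖), passT X 0 v ω
/-!
Follow the ray from `0` along a coordinate axis. Its `k`-th edge has midpoint at distance
`k + 1/2` from the origin, so its passage time has mean `((k + 1/2) ^ α f₀(eᵢ))⁻¹`, which is
summable because `α > 1`. The passage time of the whole ray therefore has finite expectation,
hence is almost surely finite, and it bounds `τ_∞` from above.
-/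

theorem lintegral_ofReal_eq_inv_of_tail_eq_exp {Ω : Type*} [MeasurableSpace Ω] {μ : Measure Ω}
    {Y : Ω → ℝ} (hY : AEMeasurable Y μ) {r : ℝ} (hr : 0 < r)
    (htail : ∀ t, 0 < t → μ {ω | t < Y ω} = ENNReal.ofReal (Real.exp (-r * t))) :
    ∫⁻ ω, ENNReal.ofReal (Y ω) ∂μ = ENNReal.ofReal r⁻¹ := by
  -- the layer-cake formula wants a nonnegative integrand, and `ofReal` ignores the negative part
  have hmax : ∀ ω, ENNReal.ofReal (Y ω) = ENNReal.ofReal (max (Y ω) 0) := by simp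
  simp_rw [hmax]
  rw [lintegral_eq_lintegral_meas_lt μ (f := fun ω => max (Y ω) 0)
    (ae_of_all _ fun ω => le_max_right _ _) (hY.max aemeasurable_const)]
  calc ∫⁻ t in Set.Ioi 0, μ {ω | t < max (Y ω) 0}
      = ∫⁻ t in Set.Ioi 0, ENNReal.ofReal (Real.exp (-r * t)) :=
        setLIntegral_congr_fun measurableSet_Ioi fun t ht => by
          simpa only [lt_max_iff, (Set.mem_Ioi.mp ht).not_gt, or_false] using htail t ht
    _ = ENNReal.ofReal (∫ t in Set.Ioi 0, Real.exp (-r * t)) :=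
        (ofReal_integral_eq_lintegral_ofReal (integrableOn_exp_mul_Ioi (by linarith) 0)
          (ae_of_all _ fun t => (Real.exp_pos _).le)).symm
    _ = ENNReal.ofReal r⁻¹ := by
        rw [integral_exp_mul_Ioi (by linarith), mul_zero, Real.exp_zero]
        congr 1
        field_simp

theorem summable_inv_nat_add_half_rpow {α : ℝ} (hα : 1 < α) :
    Summable fun k : ℕ => (((k : ℝ) + 1 / 2) ^ α)⁻¹ := by
  refine ((Real.summable_one_div_nat_add_rpow (1 / 2) α).mpr hα).congr fun k => ?_
  rw [abs_of_pos (by positivity), one_div]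

section AxisPath

variable {d : ℕ}

def axisPt (i : Fin d) (m : ℕ) : Fin d → ℤ := (m : ℤ) • unitZ d i

theorem axisPt_zero (i : Fin d) : axisPt i 0 = 0 := by
  simp [axisPt]

theorem axisPt_succ (i : Fin d) (m : ℕ) : axisPt i (m + 1) = axisPt i m + unitZ d i := by
  simp [axisPt, add_smul]

theorem toEuc_axisPt (i : Fin d) (m : ℕ) :
    toEuc (axisPt i m) = EuclideanSpace.single i (m : ℝ) := by
  ext j
  by_cases hj : j = i <;> simp [toEuc, axisPt, unitZ, hj]

theorem midpt_axisPt (i : Fin d) (k : ℕ) :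
    midpt (axisPt i k, i) = EuclideanSpace.single i ((k : ℝ) + 1 / 2) := by
  ext j
  by_cases hj : j = i <;> simp [midpt, axisPt, unitZ, hj]

theorem passT_zero_axisPt_le {Ω : Type*} (X : ((Fin d → ℤ) × Fin d) → Ω → ℝ) (i : Fin d)
    (n : ℕ) (ω : Ω) :
    passT X 0 (axisPt i n) ω ≤ ∑ k : Fin n, ENNReal.ofReal (X (axisPt i k, i) ω) := by
  unfold passT
  exact iInf_le_of_le n <| iInf_le_of_le (fun m => axisPt i m) <|
    iInf_le_of_le (fun k => (axisPt i k, i)) <| iInf_le_of_le (axisPt_zero i) <|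
      iInf_le_of_le rfl <| iInf_le _ fun k => Or.inl ⟨rfl, axisPt_succ i k⟩

theorem tauInf_le_tsum_axisPt {Ω : Type*} (X : ((Fin d → ℤ) × Fin d) → Ω → ℝ) (i : Fin d)
    (ω : Ω) : tauInf X ω ≤ ∑' k : ℕ, ENNReal.ofReal (X (axisPt i k, i) ω) := by
  unfold tauInf
  refine iSup_le fun n => ?_
  have hnorm : ‖toEuc (axisPt i (n + 1))‖ = n + 1 := by
    rw [toEuc_axisPt, PiLp.norm_single]
    norm_cast
  refine iInf₂_le_of_le (axisPt i (n + 1)) (by rw [hnorm]; linarith) ?_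
  calc passT X 0 (axisPt i (n + 1)) ω
      ≤ ∑ k : Fin (n + 1), ENNReal.ofReal (X (axisPt i k, i) ω) := passT_zero_axisPt_le X i _ ω
    _ = ∑ k ∈ Finset.range (n + 1), ENNReal.ofReal (X (axisPt i k, i) ω) :=
        Fin.sum_univ_eq_sum_range (fun k => ENNReal.ofReal (X (axisPt i k, i) ω)) _
    _ ≤ _ := ENNReal.sum_le_tsum _

end AxisPath

theorem apply_single_of_homogeneous {d : ℕ} {α : ℝ} {f f₀ : EuclideanSpace ℝ (Fin d) → ℝ}
    (hf : ∀ z : EuclideanSpace ℝ (Fin d), z ≠ 0 → f z = ‖z‖ ^ α * f₀ (‖z‖⁻¹ • z))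
    (i : Fin d) {s : ℝ} (hs : 0 < s) :
    f (EuclideanSpace.single i s) = s ^ α * f₀ (EuclideanSpace.single i 1) := by
  rw [hf _ (by simpa using hs.ne'), PiLp.norm_single, Real.norm_of_nonneg hs.le]
  congr 2
  ext j
  by_cases hj : j = i <;> simp [hj, hs.ne']

theorem stmt18_general (d : ℕ) (hd : 0 < d) (α : ℝ) (hα : 1 < α)
    (f₀ : EuclideanSpace ℝ (Fin d) → ℝ)
    (hpos : ∀ z ∈ sphere (0 : EuclideanSpace ℝ (Fin d)) 1, 0 < f₀ z)
    (f : EuclideanSpace ℝ (Fin d) → ℝ)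
    (hf : ∀ z : EuclideanSpace ℝ (Fin d), z ≠ 0 → f z = ‖z‖ ^ α * f₀ (‖z‖⁻¹ • z))
    {Ω : Type*} [MeasurableSpace Ω] (ℙ : Measure Ω)
    (X : ((Fin d → ℤ) × Fin d) → Ω → ℝ)
    (hmeas : ∀ e, Measurable (X e))
    (hexp : ∀ (e : (Fin d → ℤ) × Fin d) (t : ℝ), 0 ≤ t →
      ℙ {ω | t < X e ω} = ENNReal.ofReal (Real.exp (-(f (midpt e)) * t))) :
    ∀ᵐ ω ∂ℙ, tauInf X ω < ⊤ := by
  set i : Fin d := ⟨0, hd⟩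
  set c := f₀ (EuclideanSpace.single i 1)
  have hc : 0 < c := hpos _ (by simp)
  have hY : ∀ k : ℕ, AEMeasurable (fun ω => ENNReal.ofReal (X (axisPt i k, i) ω)) ℙ :=
    fun k => (hmeas _).ennreal_ofReal.aemeasurable
  have hmean : ∀ k : ℕ, ∫⁻ ω, ENNReal.ofReal (X (axisPt i k, i) ω) ∂ℙ
      = ENNReal.ofReal (c⁻¹ * (((k : ℝ) + 1 / 2) ^ α)⁻¹) := fun k => by
    rw [← mul_inv, mul_comm]
    refine lintegral_ofReal_eq_inv_of_tail_eq_exp (hmeas _).aemeasurable (by positivity)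
      fun t ht => ?_
    rw [hexp _ t ht.le, midpt_axisPt, apply_single_of_homogeneous hf i (by positivity)]
  have hfinite : ∫⁻ ω, ∑' k : ℕ, ENNReal.ofReal (X (axisPt i k, i) ω) ∂ℙ ≠ ⊤ := by
    rw [lintegral_tsum hY]
    simp_rw [hmean]
    rw [← ENNReal.ofReal_tsum_of_nonneg (fun k => by positivity)
      ((summable_inv_nat_add_half_rpow hα).mul_left _)]
    exact ENNReal.ofReal_ne_top
  filter_upwards [ae_lt_top' (AEMeasurable.tsum hY) hfinite] with ω hω
  exact (tauInf_le_tsum_axisPt X i ω).trans_lt hω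

theorem stmt18 (d : ℕ) (hd : 0 < d) (α : ℝ) (hα : 1 < α)
    (f₀ : EuclideanSpace ℝ (Fin d) → ℝ) (K : NNReal)
    (hLip : LipschitzOnWith K f₀ (sphere (0 : EuclideanSpace ℝ (Fin d)) 1))
    (hpos : ∀ z ∈ sphere (0 : EuclideanSpace ℝ (Fin d)) 1, 0 < f₀ z)
    (f : EuclideanSpace ℝ (Fin d) → ℝ)
    (hf : ∀ z : EuclideanSpace ℝ (Fin d), z ≠ 0 → f z = ‖z‖ ^ α * f₀ (‖z‖⁻¹ • z))
    {Ω : Type*} [MeasurableSpace Ω] (ℙ : Measure Ω) [IsProbabilityMeasure ℙ]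
    (X : ((Fin d → ℤ) × Fin d) → Ω → ℝ)
    (hmeas : ∀ e, Measurable (X e))
    (hindep : ProbabilityTheory.iIndepFun X ℙ)
    (hexp : ∀ (e : (Fin d → ℤ) × Fin d) (t : ℝ), 0 ≤ t →
      ℙ {ω | t < X e ω} = ENNReal.ofReal (Real.exp (-(f (midpt e)) * t))) :
    ∀ᵐ ω ∂ℙ, tauInf X ω < ⊤ :=
  stmt18_general d hd α hα f₀ hpos f hf ℙ X hmeas hexp
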